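/- Let D ⊆ G and let p ≥ 0 be an integer. For every integer i ≥ 1, K_{p,i}(D) ⊆ K_{p,i+1}(D); consequently dreg(D)_p = K_{p,0}(D) ∩ K_{p,1}(D). -/
import Mathlib


open Set Pointwise

/-- The submonoid `ℕC ⊆ G` generated by the list `C = {c 1, …, c l}`. -/
def NCmod {G : Type*} [AddCommGroup G] {l : ℕ} (c : Fin l → G) : Set G :=
  (AddSubmonoid.closure (Set.range c) : AddSubmonoid G)

/-- The region `ℕC[k] = ⋃ { sign(k)·(w₁c₁ + ⋯ + w_lc_l) + ℕC : w ∈ ℕ^l, ∑ w = |k| }`. -/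
def NCk {G : Type*} [AddCommGroup G] {l : ℕ} (c : Fin l → G) (k : ℤ) : Set G :=
  ⋃ (w : Fin l → ℕ) (_ : ∑ j, w j = k.natAbs),
    (k.sign • ∑ j, (w j : ℤ) • c j) +ᵥ NCmod c

/-- `K_{p,i}(D) = { d ∈ G : D + ℕC[1−i] ⊆ d + R + ℕC[1−i−p] }`. -/
def Kpi {G : Type*} [AddCommGroup G] {l : ℕ} (c : Fin l → G) (R : Set G)
    (D : Set G) (p i : ℕ) : Set G :=
  {d | D + NCk c (1 - (i : ℤ)) ⊆ d +ᵥ (R + NCk c (1 - (i : ℤ) - (p : ℤ)))}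

/-- `dreg(D)_p = ⋂_{i ≥ 0} K_{p,i}(D)`. -/
def dregP {G : Type*} [AddCommGroup G] {l : ℕ} (c : Fin l → G) (R : Set G)
    (D : Set G) (p : ℕ) : Set G :=
  ⋂ i : ℕ, Kpi c R D p i

lemma mem_NCk_neg {G : Type*} [AddCommGroup G] {l : ℕ} (c : Fin l → G) (m : ℕ) (y : G) :
    y ∈ NCk c (-(m : ℤ)) ↔ ∃ w : Fin l → ℕ, ∑ j, w j = m ∧
      ∃ n ∈ NCmod c, y = -(∑ j, (w j : ℤ) • c j) + n := by
  have key : ∀ w : Fin l → ℕ, ∑ j, w j = m →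
      (-(m:ℤ)).sign • ∑ j, (w j : ℤ) • c j = -(∑ j, (w j : ℤ) • c j) := by
    intro w hw
    rcases Nat.eq_zero_or_pos m with hm | hm
    · subst hm
      have hz : ∀ j ∈ Finset.univ, w j = 0 := fun j _ => by
        have := (Finset.sum_eq_zero_iff.mp hw) j (Finset.mem_univ j); exact this
      have : ∑ j, (w j : ℤ) • c j = 0 := by
        apply Finset.sum_eq_zero; intro j hj; rw [hz j hj]; simp
      rw [this]; simp
    · have hs : (-(m:ℤ)).sign = -1 := Int.sign_eq_neg_one_iff_neg.mpr (by omega)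
      rw [hs]; simp
  unfold NCk
  simp only [mem_iUnion, Set.mem_vadd_set, Int.natAbs_neg, Int.natAbs_natCast]
  constructor
  · rintro ⟨w, hw, n, hn, rfl⟩
    exact ⟨w, hw, n, hn, by rw [key w hw]; rfl⟩
  · rintro ⟨w, hw, n, hn, rfl⟩
    exact ⟨w, hw, n, hn, by rw [key w hw]; rfl⟩

lemma NCk_neg_succ {G : Type*} [AddCommGroup G] {l : ℕ} (c : Fin l → G) (m : ℕ) {y : G}
    (hy : y ∈ NCk c (-((m + 1 : ℕ) : ℤ))) :
    ∃ j : Fin l, ∃ y' ∈ NCk c (-(m : ℤ)), y = -c j + y' := by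
  rw [mem_NCk_neg] at hy
  obtain ⟨w, hw, n, hn, rfl⟩ := hy
  have : ∃ j ∈ Finset.univ, w j ≠ 0 := by
    by_contra h
    push_neg at h
    have : ∑ j, w j = 0 := Finset.sum_eq_zero fun j hj => h j hj
    omega
  obtain ⟨j, -, hj⟩ := this
  set w' : Fin l → ℕ := Function.update w j (w j - 1) with hw'
  have hsum : ∑ k, w' k = m := by
    rw [hw', Finset.sum_update_of_mem (Finset.mem_univ j)]
    have := Finset.add_sum_erase Finset.univ w (Finset.mem_univ j)
    rw [Finset.sdiff_singleton_eq_erase]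
    omega
  have hsumZ : ∑ k, (w k : ℤ) • c k = c j + ∑ k, (w' k : ℤ) • c k := by
    have h1 : ∑ k, (w' k : ℤ) • c k
        = ((w j - 1 : ℕ) : ℤ) • c j + ∑ k ∈ Finset.univ.erase j, (w k : ℤ) • c k := by
      rw [← Finset.add_sum_erase _ _ (Finset.mem_univ j)]
      congr 1
      · simp [hw']
      · exact Finset.sum_congr rfl fun k hk => by
          rw [hw', Function.update_of_ne (Finset.ne_of_mem_erase hk)]
    have h2 : ∑ k, (w k : ℤ) • c k
        = (w j : ℤ) • c j + ∑ k ∈ Finset.univ.erase j, (w k : ℤ) • c k := by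
      exact (Finset.add_sum_erase Finset.univ _ (Finset.mem_univ j)).symm
    have h3 : ((w j - 1 : ℕ) : ℤ) = (w j : ℤ) - 1 := by
      have : 1 ≤ w j := by omega
      push_cast [this]; ring
    rw [h1, h2, h3, sub_smul, one_smul]
    abel
  refine ⟨j, -(∑ k, (w' k : ℤ) • c k) + n, ?_, ?_⟩
  · rw [mem_NCk_neg]; exact ⟨w', hsum, n, hn, rfl⟩
  · rw [hsumZ]; abel

lemma NCk_sub_mem {G : Type*} [AddCommGroup G] {l : ℕ} (c : Fin l → G) (m : ℕ) {z : G}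
    (hz : z ∈ NCk c (-(m : ℤ))) (j : Fin l) :
    z - c j ∈ NCk c (-((m + 1 : ℕ) : ℤ)) := by
  rw [mem_NCk_neg] at hz ⊢
  obtain ⟨w, hw, n, hn, rfl⟩ := hz
  set w' : Fin l → ℕ := Function.update w j (w j + 1) with hw'
  have hsum : ∑ k, w' k = m + 1 := by
    rw [hw', Finset.sum_update_of_mem (Finset.mem_univ j)]
    have := Finset.add_sum_erase Finset.univ w (Finset.mem_univ j)
    rw [Finset.sdiff_singleton_eq_erase]
    omega
  have hsumZ : ∑ k, (w' k : ℤ) • c k = c j + ∑ k, (w k : ℤ) • c k := by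
    have h1 : ∑ k, (w' k : ℤ) • c k
        = ((w j + 1 : ℕ) : ℤ) • c j + ∑ k ∈ Finset.univ.erase j, (w k : ℤ) • c k := by
      rw [← Finset.add_sum_erase _ _ (Finset.mem_univ j)]
      congr 1
      · simp [hw']
      · exact Finset.sum_congr rfl fun k hk => by
          rw [hw', Function.update_of_ne (Finset.ne_of_mem_erase hk)]
    have h2 : ∑ k, (w k : ℤ) • c k
        = (w j : ℤ) • c j + ∑ k ∈ Finset.univ.erase j, (w k : ℤ) • c k := by
      exact (Finset.add_sum_erase Finset.univ _ (Finset.mem_univ j)).symm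
    rw [h1, h2]
    push_cast
    rw [add_smul, one_smul]
    abel
  exact ⟨w', hsum, n, hn, by rw [hsumZ]; abel⟩

theorem Kpi_mono_and_dregP_eq {G : Type*} [AddCommGroup G] {l : ℕ}
    (c : Fin l → G) (R : Set G) (D : Set G) (p : ℕ) :
    (∀ i : ℕ, 1 ≤ i → Kpi c R D p i ⊆ Kpi c R D p (i + 1)) ∧
      dregP c R D p = Kpi c R D p 0 ∩ Kpi c R D p 1 := by
  have mono : ∀ i : ℕ, 1 ≤ i → Kpi c R D p i ⊆ Kpi c R D p (i + 1) := by
    intro i hi d hd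
    obtain ⟨m, rfl⟩ : ∃ m, i = m + 1 := ⟨i - 1, by omega⟩
    have e1 : (1 : ℤ) - ((m + 1 + 1 : ℕ) : ℤ) = -((m + 1 : ℕ) : ℤ) := by push_cast; ring
    have e2 : (1 : ℤ) - ((m + 1 : ℕ) : ℤ) = -((m : ℕ) : ℤ) := by push_cast; ring
    have e3 : (1 : ℤ) - ((m + 1 : ℕ) : ℤ) - (p : ℤ) = -((m + p : ℕ) : ℤ) := by push_cast; ring
    have e4 : (1 : ℤ) - ((m + 1 + 1 : ℕ) : ℤ) - (p : ℤ) = -((m + p + 1 : ℕ) : ℤ) := by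
      push_cast; ring
    intro a ha
    rw [Set.mem_add] at ha
    obtain ⟨x, hx, y, hy, rfl⟩ := ha
    rw [e1] at hy
    obtain ⟨j, y', hy', rfl⟩ := NCk_neg_succ c m hy
    have hxy' : x + y' ∈ d +ᵥ (R + NCk c (1 - ((m + 1 : ℕ) : ℤ) - (p : ℤ))) := by
      apply hd
      rw [Set.mem_add]
      exact ⟨x, hx, y', by rw [e2]; exact hy', rfl⟩
    rw [Set.mem_vadd_set] at hxy'
    obtain ⟨b, hb, hbe⟩ := hxy'
    rw [Set.mem_add] at hb
    obtain ⟨r, hr, z, hz, rfl⟩ := hb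
    rw [e3] at hz
    have hz' : z - c j ∈ NCk c (1 - ((m + 1 + 1 : ℕ) : ℤ) - (p : ℤ)) := by
      rw [e4]; exact NCk_sub_mem c (m + p) hz j
    rw [Set.mem_vadd_set]
    refine ⟨r + (z - c j), Set.add_mem_add hr hz', ?_⟩
    have : d +ᵥ (r + (z - c j)) = (d +ᵥ (r + z)) - c j := by
      simp only [vadd_eq_add]; abel
    rw [this, hbe]
    abel
  refine ⟨mono, ?_⟩
  ext d
  simp only [dregP, Set.mem_iInter, Set.mem_inter_iff]
  constructor
  · intro h; exact ⟨h 0, h 1⟩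
  · rintro ⟨h0, h1⟩ i
    induction i with
    | zero => exact h0
    | succ n ih =>
      cases n with
      | zero => exact h1
      | succ k => exact mono (k + 1) (by omega) ih
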